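/- arXiv:1509.06302 — 8 statements merged into one kernel-verified Lean document; each statement's English description precedes it below -/
import Mathlib

section
/- Let R be a commutative ℝ-algebra and σ ∈ R with σ² = 0. Let a, b, c, d, e be positive reals, χ = ac/(bd), r = √2·ea/b, s = √2·be/a, and let x₁, x₂, y, ρ, λ be the basic-calculation coordinates. Set A = r·(0,1,0,0,0), C = s·(1,0,0,0,0), D = (x₁, x₂, −y, ρ, λ). Then for the super Minkowski pairing: ⟨A,D⟩ = d², ⟨C,D⟩ = c², ⟨D,D⟩ = 0; moreover −(x₁/x₂)^(1/4)·λ/√(x₁x₂) = σ = (x₂/x₁)^(1/4)·ρ/√(x₁x₂), and the fermion label of D vanishes: √x₂·ρ − ((−y)/√x₂)·λ = 0, so D lies on the special light cone. -/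
/-!
Write `u = χ^(1/2)`; then `D = (y/u², y u², -y, (y/u) σ, -(y u) σ)`. Since `x₁ x₂ = y²` the even
part of `D` is isotropic, and its odd part squares to zero because `σ² = 0`. Pairing with `A` and
`C` only sees `r x₁ / 2` and `s x₂ / 2`, in which `χ` cancels against `r` and `s` to leave `d²` and
`c²`. The remaining claims are linear in `σ` and reduce to scalar identities in `y` and `u`.
-/

/-- The super Minkowski pairing of quintuples `(x₁,x₂,y,φ,θ)` with entries in a
commutative ℝ-algebra: `⟨A,A'⟩ = (x₁x₂' + x₁'x₂)/2 − yy' + φθ' + φ'θ`. -/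
noncomputable def superPairing {R : Type*} [CommRing R] [Algebra ℝ R]
    (A A' : R × R × R × R × R) : R :=
  ((1 : ℝ)/2) • (A.1 * A'.2.1 + A'.1 * A.2.1) - A.2.2.1 * A'.2.2.1
    + A.2.2.2.1 * A'.2.2.2.2 + A'.2.2.2.1 * A.2.2.2.2

open Real

section Pairing

variable {R : Type*} [CommRing R] [Algebra ℝ R]

theorem superPairing_snd_left (t x₁ x₂ : ℝ) (Y φ θ : R) :
    superPairing (0, algebraMap ℝ R t, 0, 0, 0) (algebraMap ℝ R x₁, algebraMap ℝ R x₂, Y, φ, θ)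
      = algebraMap ℝ R (t * x₁ / 2) := by
  simp only [superPairing, zero_mul, mul_zero, add_zero, zero_add, sub_zero,
    Algebra.smul_def, ← map_mul]
  ring_nf

theorem superPairing_fst_left (t x₁ x₂ : ℝ) (Y φ θ : R) :
    superPairing (algebraMap ℝ R t, 0, 0, 0, 0) (algebraMap ℝ R x₁, algebraMap ℝ R x₂, Y, φ, θ)
      = algebraMap ℝ R (t * x₂ / 2) := by
  simp only [superPairing, zero_mul, mul_zero, add_zero, sub_zero, Algebra.smul_def, ← map_mul]
  ring_nf

theorem superPairing_self_of_real (x₁ x₂ y : ℝ) (φ θ : R) :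
    superPairing (algebraMap ℝ R x₁, algebraMap ℝ R x₂, algebraMap ℝ R y, φ, θ)
        (algebraMap ℝ R x₁, algebraMap ℝ R x₂, algebraMap ℝ R y, φ, θ)
      = algebraMap ℝ R (x₁ * x₂ - y ^ 2) + 2 * (φ * θ) := by
  have half : algebraMap ℝ R (1 / 2) * 2 = 1 := by
    rw [← map_ofNat (algebraMap ℝ R), ← map_mul]; norm_num
  simp only [superPairing, Algebra.smul_def, map_sub, map_mul, map_pow]
  linear_combination (algebraMap ℝ R x₁ * algebraMap ℝ R x₂) * half

theorem smul_mul_smul_of_mul_self_eq_zero {σ : R} (hσ : σ * σ = 0) (p q : ℝ) :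
    (p • σ) * (q • σ) = 0 := by
  rw [smul_mul_smul_comm, hσ, smul_zero]

end Pairing

theorem rpow_quarter_of_eq_pow_four {x u : ℝ} (hu : 0 ≤ u) (h : x = u ^ 4) :
    x ^ (1 / 4 : ℝ) = u := by
  subst h
  simpa using pow_rpow_inv_natCast hu (n := 4) (by norm_num)

theorem sq_rpow_half {u : ℝ} (hu : 0 ≤ u) : (u ^ 2) ^ (1 / 2 : ℝ) = u := by
  rw [← sqrt_eq_rpow, sqrt_sq hu]

theorem sq_rpow_neg_half {u : ℝ} (hu : 0 ≤ u) : (u ^ 2) ^ (-1 / 2 : ℝ) = u⁻¹ := by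
  rw [neg_div, rpow_neg (sq_nonneg u), sq_rpow_half hu]

-- `u` stands for `χ^(1/2)`.
theorem smul_eq_self_and_fermionLabel_eq_zero {M : Type*} [AddCommGroup M] [Module ℝ M] (σ : M)
    {x₁ x₂ y u : ℝ} (hy : 0 < y) (hu : 0 < u) (hx₁ : x₁ = y / u ^ 2) (hx₂ : x₂ = y * u ^ 2) :
    (-((x₁ / x₂) ^ ((1 : ℝ)/4) / √(x₁ * x₂))) • (-(y * u)) • σ = σ ∧
    ((x₂ / x₁) ^ ((1 : ℝ)/4) / √(x₁ * x₂)) • (y / u) • σ = σ ∧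
    √x₂ • (y / u) • σ - ((-y) / √x₂) • (-(y * u)) • σ = 0 := by
  have hsqrt : √(x₁ * x₂) = y := by
    rw [hx₁, hx₂, show y / u ^ 2 * (y * u ^ 2) = y ^ 2 by field_simp, sqrt_sq hy.le]
  have hq₁ : (x₁ / x₂) ^ (1 / 4 : ℝ) = u⁻¹ :=
    rpow_quarter_of_eq_pow_four (inv_nonneg.2 hu.le) (by rw [hx₁, hx₂]; field_simp)
  have hq₂ : (x₂ / x₁) ^ (1 / 4 : ℝ) = u :=
    rpow_quarter_of_eq_pow_four hu.le (by rw [hx₁, hx₂]; field_simp)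
  have hsx₂ : √x₂ = √y * u := by rw [hx₂, sqrt_mul hy.le, sqrt_sq hu.le]
  have hy' : √y ^ 2 = y := sq_sqrt hy.le
  refine ⟨?_, ?_, ?_⟩
  · rw [hq₁, hsqrt, smul_smul]
    convert one_smul ℝ σ
    field_simp
  · rw [hq₂, hsqrt, smul_smul]
    convert one_smul ℝ σ
    field_simp
  · rw [hsx₂, smul_smul, smul_smul, ← sub_smul]
    convert zero_smul ℝ σ
    field_simp
    linear_combination y * hy'

/-- Basic calculation: the point `D` given by the basic-calculation coordinates
realizes the λ-lengths `d, c` with `A, C`, is isotropic, has `σ` as its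
μ-invariant-type odd coordinate, and has vanishing fermion label, hence lies
on the special light cone. -/
theorem stmt_2 (R : Type*) [CommRing R] [Algebra ℝ R]
    (σ : R) (hσ : σ * σ = 0)
    (a b c d e : ℝ) (ha : 0 < a) (hb : 0 < b) (hc : 0 < c) (hd : 0 < d) (he : 0 < e)
    (χ r s x₁ x₂ y : ℝ) (ρ lam : R)
    (hχ : χ = a * c / (b * d))
    (hr : r = Real.sqrt 2 * (e * a) / b)
    (hs : s = Real.sqrt 2 * (b * e) / a)
    (hx₁ : x₁ = Real.sqrt 2 * (c * d / e) * χ⁻¹)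
    (hx₂ : x₂ = Real.sqrt 2 * (c * d / e) * χ)
    (hy : y = Real.sqrt 2 * (c * d / e))
    (hρ : ρ = (Real.sqrt 2 * (c * d / e) * χ ^ (-(1 : ℝ)/2)) • σ)
    (hlam : lam = (-(Real.sqrt 2 * (c * d / e) * χ ^ ((1 : ℝ)/2))) • σ) :
    superPairing (0, algebraMap ℝ R r, 0, 0, 0)
        (algebraMap ℝ R x₁, algebraMap ℝ R x₂, algebraMap ℝ R (-y), ρ, lam)
      = algebraMap ℝ R (d ^ 2) ∧
    superPairing (algebraMap ℝ R s, 0, 0, 0, 0)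
        (algebraMap ℝ R x₁, algebraMap ℝ R x₂, algebraMap ℝ R (-y), ρ, lam)
      = algebraMap ℝ R (c ^ 2) ∧
    superPairing (algebraMap ℝ R x₁, algebraMap ℝ R x₂, algebraMap ℝ R (-y), ρ, lam)
        (algebraMap ℝ R x₁, algebraMap ℝ R x₂, algebraMap ℝ R (-y), ρ, lam)
      = 0 ∧
    (-((x₁ / x₂) ^ ((1 : ℝ)/4) / Real.sqrt (x₁ * x₂))) • lam = σ ∧
    ((x₂ / x₁) ^ ((1 : ℝ)/4) / Real.sqrt (x₁ * x₂)) • ρ = σ ∧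
    Real.sqrt x₂ • ρ - ((-y) / Real.sqrt x₂) • lam = 0 := by
  have two : √2 ^ 2 = 2 := sq_sqrt zero_le_two
  have hχ0 : 0 < χ := by rw [hχ]; positivity
  have hy0 : 0 < y := by rw [hy]; positivity
  have hAD : r * x₁ / 2 = d ^ 2 := by
    rw [hr, hx₁, hχ]; field_simp; linear_combination two
  have hCD : s * x₂ / 2 = c ^ 2 := by
    rw [hs, hx₂, hχ]; field_simp; linear_combination two
  rw [← hy] at hx₁ hx₂ hρ hlam
  obtain ⟨u, hu, rfl⟩ : ∃ u, 0 < u ∧ χ = u ^ 2 := ⟨√χ, sqrt_pos.2 hχ0, (sq_sqrt hχ0.le).symm⟩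
  rw [← div_eq_mul_inv] at hx₁
  rw [sq_rpow_neg_half hu.le, ← div_eq_mul_inv] at hρ
  rw [sq_rpow_half hu.le] at hlam
  have hnull : x₁ * x₂ - (-y) ^ 2 = 0 := by rw [hx₁, hx₂]; field_simp; ring
  subst hρ hlam
  refine ⟨by rw [superPairing_snd_left, hAD], by rw [superPairing_fst_left, hCD], ?_,
    smul_eq_self_and_fermionLabel_eq_zero σ hy0 hu hx₁ hx₂⟩
  rw [superPairing_self_of_real, smul_mul_smul_of_mul_self_eq_zero hσ, hnull, map_zero, mul_zero,
    add_zero]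
end

section
/- Fix χ > 0 and real σ, θ, and let (ν, μ) be the image of (θ, σ) under the odd Ptolemy transformation with cross-ratio χ. Then applying the odd Ptolemy transformation with cross-ratio χ⁻¹ to the pair (ν, μ) (with ν in the θ-slot and μ in the σ-slot) returns (σ, −θ): (μ + ν·√(χ⁻¹))/√(1+χ⁻¹) = σ and (μ·√(χ⁻¹) − ν)/√(1+χ⁻¹) = −θ. Hence applying the odd Ptolemy transformation twice effects the switch transformation together with the sign reversal θ ↦ −θ. -/
/-! With `a = √χ` and `b = √(1 + χ)` one has `b² = 1 + a²`, `√χ⁻¹ = a⁻¹` and `√(1 + χ⁻¹) = b / a`.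
Up to the order of the slots, the transformation with cross-ratio `χ` is the rotation with cosine
`1 / b` and sine `a / b`, and the one with cross-ratio `χ⁻¹` has cosine `a / b` and sine `1 / b`.
The two angles are complementary, so the composite is a quarter turn. -/

lemma Real.sqrt_one_add_inv {χ : ℝ} (hχ : 0 < χ) :
    √(1 + χ⁻¹) = √(1 + χ) / √χ := by
  rw [← Real.sqrt_div (by positivity), add_div, div_self hχ.ne', one_div, add_comm]

lemma odd_ptolemy_twice_of_sq_eq {a b : ℝ} (ha : a ≠ 0) (hb : b ^ 2 = 1 + a ^ 2) (σ θ : ℝ) :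
    ((σ * a - θ) / b + (σ + θ * a) / b * a⁻¹) / (b / a) = σ ∧
    ((σ * a - θ) / b * a⁻¹ - (σ + θ * a) / b) / (b / a) = -θ := by
  have hb₀ : b ≠ 0 := by
    rintro rfl
    nlinarith [sq_nonneg a]
  constructor <;> field_simp
  · linear_combination (-σ) * hb
  · linear_combination θ * hb

/-- Applying the odd Ptolemy transformation twice (second time with cross-ratio
`χ⁻¹`) returns `(σ, −θ)`: the switch transformation with sign reversal. -/
theorem stmt_5 (χ : ℝ) (hχ : 0 < χ) (σ θ ν μ : ℝ)
    (hν : ν = (σ + θ * Real.sqrt χ) / Real.sqrt (1 + χ))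
    (hμ : μ = (σ * Real.sqrt χ - θ) / Real.sqrt (1 + χ)) :
    (μ + ν * Real.sqrt χ⁻¹) / Real.sqrt (1 + χ⁻¹) = σ ∧
    (μ * Real.sqrt χ⁻¹ - ν) / Real.sqrt (1 + χ⁻¹) = -θ := by
  subst hν hμ
  rw [Real.sqrt_inv, Real.sqrt_one_add_inv hχ]
  exact odd_ptolemy_twice_of_sq_eq (Real.sqrt_pos.mpr hχ).ne'
    (by rw [Real.sq_sqrt (by positivity), Real.sq_sqrt hχ.le]) σ θ
end

section
/- Let R be an associative unital ℝ-algebra and σ, θ ∈ R with σ² = θ² = 0 and σθ = −θσ; fix χ > 0 and let (ν, μ) be the image of (θ, σ) under the odd Ptolemy transformation with cross-ratio χ. Then νμ = −σθ and μν = σθ. Consequently, for all positive reals a, b, c, d with χ = ac/(bd), (ac+bd)·(1 + μν·√(χ⁻¹)/(1+χ⁻¹)) = (ac+bd)·(1 + σθ·√χ/(1+χ)), so performing the even super Ptolemy transformation twice restores the λ-length of the flipped edge. -/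
/-!
Every product of two linear combinations of anticommuting square-zero elements `σ, θ` is a
multiple of `σθ`, the multiple being the determinant of the coefficients. The odd Ptolemy
transformation is `(1 + χ)^{-1/2}` times a matrix of determinant `∓(1 + χ)`, so `νμ = -σθ` and
`μν = σθ`; the λ-length statement then reduces to the invariance of `√χ / (1 + χ)` under
`χ ↦ χ⁻¹`.
-/

theorem smul_add_smul_mul_smul_add_smul {K R : Type*} [CommRing K] [Ring R] [Algebra K R]
    {σ θ : R} (hσ : σ * σ = 0) (hθ : θ * θ = 0) (hσθ : σ * θ = -(θ * σ)) (a b c d : K) :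
    (a • σ + b • θ) * (c • σ + d • θ) = (a * d - b * c) • (σ * θ) := by
  have hθσ : θ * σ = -(σ * θ) := by rw [hσθ, neg_neg]
  simp only [add_mul, mul_add, smul_mul_smul_comm, hσ, hθ, hθσ, smul_zero]
  module

theorem Real.sqrt_inv_div_one_add_inv (χ : ℝ) :
    √χ⁻¹ / (1 + χ⁻¹) = √χ / (1 + χ) := by
  rcases le_or_gt χ 0 with hχ | hχ
  · rw [Real.sqrt_eq_zero'.2 hχ, Real.sqrt_eq_zero'.2 (inv_nonpos.2 hχ), zero_div, zero_div]
  · have hχ' : √χ ^ 2 = χ := Real.sq_sqrt hχ.le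
    rw [Real.sqrt_inv]
    field_simp
    rw [hχ']
    ring

/-- For anticommuting square-zero odd elements, the odd Ptolemy transformation
satisfies `νμ = −σθ` and `μν = σθ`; hence performing the even super Ptolemy
transformation twice restores the λ-length of the flipped edge. -/
theorem stmt_6 (R : Type*) [Ring R] [Algebra ℝ R]
    (σ θ : R) (hσ : σ * σ = 0) (hθ : θ * θ = 0) (hσθ : σ * θ = -(θ * σ))
    (χ : ℝ) (hχ : 0 < χ) (ν μ : R)
    (hν : ν = (Real.sqrt (1 + χ))⁻¹ • (σ + Real.sqrt χ • θ))
    (hμ : μ = (Real.sqrt (1 + χ))⁻¹ • (Real.sqrt χ • σ - θ)) :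
    ν * μ = -(σ * θ) ∧
    μ * ν = σ * θ ∧
    ∀ a b c d : ℝ, 0 < a → 0 < b → 0 < c → 0 < d → χ = a * c / (b * d) →
      algebraMap ℝ R (a * c + b * d)
          * (1 + (Real.sqrt χ⁻¹ / (1 + χ⁻¹)) • (μ * ν))
        = algebraMap ℝ R (a * c + b * d)
          * (1 + (Real.sqrt χ / (1 + χ)) • (σ * θ)) := by
  set k := (√(1 + χ))⁻¹
  have hk : k * k * (1 + χ) = 1 := by
    rw [← mul_inv, Real.mul_self_sqrt (by positivity), inv_mul_cancel₀ (by positivity)]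
  have hsqrt : √χ * √χ = χ := Real.mul_self_sqrt hχ.le
  have hν' : ν = k • σ + (k * √χ) • θ := by rw [hν, smul_add, smul_smul]
  have hμ' : μ = (k * √χ) • σ + (-k) • θ := by
    rw [hμ, smul_sub, smul_smul, neg_smul, sub_eq_add_neg]
  have hνμ : ν * μ = -(σ * θ) := by
    rw [hν', hμ', smul_add_smul_mul_smul_add_smul hσ hθ hσθ, ← neg_one_smul ℝ (σ * θ)]
    congr 1
    linear_combination -(k * k * hsqrt) - hk
  have hμν : μ * ν = σ * θ := by
    rw [hμ', hν', smul_add_smul_mul_smul_add_smul hσ hθ hσθ]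
    convert one_smul ℝ (σ * θ) using 2
    linear_combination k * k * hsqrt + hk
  exact ⟨hνμ, hμν, fun a b c d _ _ _ _ _ => by rw [hμν, Real.sqrt_inv_div_one_add_inv]⟩
end

section
/- Let a, b, c, d be positive reals and χ = ac/(bd). Then for every real u: (ac+bd)·(1 + u·√χ/(1+χ)) = bd·(1 + χ + u·√χ) = ac·(1 + χ⁻¹ + u·√(χ⁻¹)). In particular, taking u to represent the product σθ of μ-invariants, the super Ptolemy image ef = (ac+bd)(1 + σθ√χ/(1+χ)) satisfies ef/(bd) = 1 + χ + σθ√χ and ef/(ac) = 1 + χ⁻¹ + σθ√(χ⁻¹), which gives the evolution of the shear (cross-ratio) coordinates under a flip: χ_a ↦ χ_a(1+χ+σθ√χ), χ_c ↦ χ_c(1+χ+σθ√χ), χ_b ↦ χ_b(1+χ⁻¹+σθ√(χ⁻¹))⁻¹, χ_d ↦ χ_d(1+χ⁻¹+σθ√(χ⁻¹))⁻¹. -/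
/-!
Write `ac = bd·χ`. Then `ac + bd = bd(1 + χ)`, and the factor `1 + χ` cancels the denominator of
the super Ptolemy correction, giving `ef = bd(1 + χ + u√χ)`. Since `χ·√(χ⁻¹) = √χ`, multiplying
`1 + χ⁻¹ + u√(χ⁻¹)` by `χ` gives `1 + χ + u√χ` again, so `ef = bd·χ(1 + χ⁻¹ + u√(χ⁻¹)) = ac(…)`.
-/

namespace Real

lemma mul_sqrt_inv_self (x : ℝ) : x * √x⁻¹ = √x := by
  rw [sqrt_inv, ← div_eq_mul_inv, div_sqrt]

lemma mul_one_add_inv_add_mul_sqrt_inv {χ : ℝ} (hχ : χ ≠ 0) (u : ℝ) :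
    χ * (1 + χ⁻¹ + u * √χ⁻¹) = 1 + χ + u * √χ := by
  rw [mul_add, mul_add, mul_inv_cancel₀ hχ, mul_left_comm, mul_sqrt_inv_self]
  ring

end Real

/-- Evolution of the shear (cross-ratio) coordinates under a flip: the super
Ptolemy image `ef = (ac+bd)(1 + u√χ/(1+χ))` (with `u` standing for `σθ`)
satisfies `ef = bd(1+χ+u√χ) = ac(1+χ⁻¹+u√(χ⁻¹))`, so that
`ef/(bd) = 1+χ+u√χ` and `ef/(ac) = 1+χ⁻¹+u√(χ⁻¹)`. -/
theorem stmt_7 (a b c d χ : ℝ) (ha : 0 < a) (hb : 0 < b) (hc : 0 < c) (hd : 0 < d)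
    (hχ : χ = a * c / (b * d)) :
    ∀ u : ℝ,
      (a * c + b * d) * (1 + u * Real.sqrt χ / (1 + χ))
          = b * d * (1 + χ + u * Real.sqrt χ) ∧
      (a * c + b * d) * (1 + u * Real.sqrt χ / (1 + χ))
          = a * c * (1 + χ⁻¹ + u * Real.sqrt χ⁻¹) ∧
      (a * c + b * d) * (1 + u * Real.sqrt χ / (1 + χ)) / (b * d)
          = 1 + χ + u * Real.sqrt χ ∧
      (a * c + b * d) * (1 + u * Real.sqrt χ / (1 + χ)) / (a * c)
          = 1 + χ⁻¹ + u * Real.sqrt χ⁻¹ := by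
  intro u
  have hbd : b * d ≠ 0 := (mul_pos hb hd).ne'
  have hac : a * c ≠ 0 := (mul_pos ha hc).ne'
  have hχ_pos : 0 < χ := hχ ▸ div_pos (mul_pos ha hc) (mul_pos hb hd)
  have hac_eq : a * c = b * d * χ := by rw [hχ, mul_div_cancel₀ _ hbd]
  have h_bd : (a * c + b * d) * (1 + u * √χ / (1 + χ)) = b * d * (1 + χ + u * √χ) := by
    rw [hac_eq]
    field_simp
    ring
  have h_ac : (a * c + b * d) * (1 + u * √χ / (1 + χ)) = a * c * (1 + χ⁻¹ + u * √χ⁻¹) := by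
    rw [h_bd, hac_eq, mul_assoc (b * d), Real.mul_one_add_inv_add_mul_sqrt_inv hχ_pos.ne']
  refine ⟨h_bd, h_ac, ?_, ?_⟩
  · rw [h_bd, mul_div_cancel_left₀ _ hbd]
  · rw [h_ac, mul_div_cancel_left₀ _ hac]
end

section
/- Let R be an associative unital ring, let a, b, c, d be central elements of R with a invertible, let α, β, θ ∈ R pairwise anticommute with α² = β² = θ² = 0, set f = 1 + αβ, γ = aβ − cα, δ = bβ − dα, and assume the OSp(1|2) constraint (ad − bc)·(1 + αβ) = 1. Define the coordinates of the image of e_θ = (1,0,0,0,θ) under such a group element: x₁ = a² + 2γθc, y = ab + γθd − cθδ, ρ = aα + γθβ + cθf, λ = bα + δθβ + dθf. Then x₁·λ − y·ρ = a·θ. Since s = a + a⁻¹γθc satisfies s² = x₁ and s·θ = a·θ, this is exactly the statement that the fermion label √x₁·λ − (y/√x₁)·ρ of the image point equals θ. -/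
/-- The fermion label of the image of `e_θ = (1,0,0,0,θ)` under an element of
`OSp(1|2)` equals `θ`: with `x₁ = a²+2γθc`, `y = ab+γθd−cθδ`, `ρ`, `λ` the
image coordinates, one has `x₁λ − yρ = aθ`, and `s = a + a⁻¹γθc` satisfies
`s² = x₁` and `sθ = aθ`. -/
theorem stmt_9 (R : Type*) [Ring R]
    (a b c d ainv : R)
    (hca : ∀ r : R, Commute a r) (hcb : ∀ r : R, Commute b r)
    (hcc : ∀ r : R, Commute c r) (hcd : ∀ r : R, Commute d r)
    (hainv : a * ainv = 1) (hainv' : ainv * a = 1)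
    (α β θ : R)
    (hα : α * α = 0) (hβ : β * β = 0) (hθ : θ * θ = 0)
    (hαβ : α * β = -(β * α)) (hαθ : α * θ = -(θ * α)) (hβθ : β * θ = -(θ * β))
    (f γ δ x₁ y ρ lam s : R)
    (hf : f = 1 + α * β)
    (hγ : γ = a * β - c * α) (hδ : δ = b * β - d * α)
    (hconstraint : (a * d - b * c) * (1 + α * β) = 1)
    (hx₁ : x₁ = a ^ 2 + 2 * (γ * θ * c))
    (hy : y = a * b + γ * θ * d - c * θ * δ)
    (hρ : ρ = a * α + γ * θ * β + c * θ * f)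
    (hlam : lam = b * α + δ * θ * β + d * θ * f)
    (hs : s = a + ainv * γ * θ * c) :
    x₁ * lam - y * ρ = a * θ ∧ s * s = x₁ ∧ s * θ = a * θ := by
  have hcainv : ∀ r : R, Commute ainv r := by
    intro r
    calc ainv * r = ainv * r * (a * ainv) := by rw [hainv, mul_one]
      _ = ainv * (a * r) * ainv := by rw [(hca r).eq]; noncomm_ring
      _ = r * ainv := by rw [← mul_assoc, hainv', one_mul]
  have MAa : ∀ x : R, α * (a * x) = a * (α * x) := fun x => by rw [← mul_assoc, ← (hca α).eq, mul_assoc]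
  have MAa' : α * a = a * α := (hca α).eq.symm
  have MAb : ∀ x : R, α * (b * x) = b * (α * x) := fun x => by rw [← mul_assoc, ← (hcb α).eq, mul_assoc]
  have MAb' : α * b = b * α := (hcb α).eq.symm
  have MAc : ∀ x : R, α * (c * x) = c * (α * x) := fun x => by rw [← mul_assoc, ← (hcc α).eq, mul_assoc]
  have MAc' : α * c = c * α := (hcc α).eq.symm
  have MAd : ∀ x : R, α * (d * x) = d * (α * x) := fun x => by rw [← mul_assoc, ← (hcd α).eq, mul_assoc]
  have MAd' : α * d = d * α := (hcd α).eq.symm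
  have MAainv : ∀ x : R, α * (ainv * x) = ainv * (α * x) := fun x => by rw [← mul_assoc, ← (hcainv α).eq, mul_assoc]
  have MAainv' : α * ainv = ainv * α := (hcainv α).eq.symm
  have MBa : ∀ x : R, β * (a * x) = a * (β * x) := fun x => by rw [← mul_assoc, ← (hca β).eq, mul_assoc]
  have MBa' : β * a = a * β := (hca β).eq.symm
  have MBb : ∀ x : R, β * (b * x) = b * (β * x) := fun x => by rw [← mul_assoc, ← (hcb β).eq, mul_assoc]
  have MBb' : β * b = b * β := (hcb β).eq.symm
  have MBc : ∀ x : R, β * (c * x) = c * (β * x) := fun x => by rw [← mul_assoc, ← (hcc β).eq, mul_assoc]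
  have MBc' : β * c = c * β := (hcc β).eq.symm
  have MBd : ∀ x : R, β * (d * x) = d * (β * x) := fun x => by rw [← mul_assoc, ← (hcd β).eq, mul_assoc]
  have MBd' : β * d = d * β := (hcd β).eq.symm
  have MBainv : ∀ x : R, β * (ainv * x) = ainv * (β * x) := fun x => by rw [← mul_assoc, ← (hcainv β).eq, mul_assoc]
  have MBainv' : β * ainv = ainv * β := (hcainv β).eq.symm
  have MTa : ∀ x : R, θ * (a * x) = a * (θ * x) := fun x => by rw [← mul_assoc, ← (hca θ).eq, mul_assoc]
  have MTa' : θ * a = a * θ := (hca θ).eq.symm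
  have MTb : ∀ x : R, θ * (b * x) = b * (θ * x) := fun x => by rw [← mul_assoc, ← (hcb θ).eq, mul_assoc]
  have MTb' : θ * b = b * θ := (hcb θ).eq.symm
  have MTc : ∀ x : R, θ * (c * x) = c * (θ * x) := fun x => by rw [← mul_assoc, ← (hcc θ).eq, mul_assoc]
  have MTc' : θ * c = c * θ := (hcc θ).eq.symm
  have MTd : ∀ x : R, θ * (d * x) = d * (θ * x) := fun x => by rw [← mul_assoc, ← (hcd θ).eq, mul_assoc]
  have MTd' : θ * d = d * θ := (hcd θ).eq.symm
  have MTainv : ∀ x : R, θ * (ainv * x) = ainv * (θ * x) := fun x => by rw [← mul_assoc, ← (hcainv θ).eq, mul_assoc]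
  have MTainv' : θ * ainv = ainv * θ := (hcainv θ).eq.symm
  have Oba : ∀ x : R, b * (a * x) = a * (b * x) := fun x => by rw [← mul_assoc, ← (hca b).eq, mul_assoc]
  have Oba' : b * a = a * b := (hca b).eq.symm
  have Oca : ∀ x : R, c * (a * x) = a * (c * x) := fun x => by rw [← mul_assoc, ← (hca c).eq, mul_assoc]
  have Oca' : c * a = a * c := (hca c).eq.symm
  have Oda : ∀ x : R, d * (a * x) = a * (d * x) := fun x => by rw [← mul_assoc, ← (hca d).eq, mul_assoc]
  have Oda' : d * a = a * d := (hca d).eq.symm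
  have Obainv : ∀ x : R, b * (ainv * x) = ainv * (b * x) := fun x => by rw [← mul_assoc, ← (hcainv b).eq, mul_assoc]
  have Obainv' : b * ainv = ainv * b := (hcainv b).eq.symm
  have Ocainv : ∀ x : R, c * (ainv * x) = ainv * (c * x) := fun x => by rw [← mul_assoc, ← (hcainv c).eq, mul_assoc]
  have Ocainv' : c * ainv = ainv * c := (hcainv c).eq.symm
  have Odainv : ∀ x : R, d * (ainv * x) = ainv * (d * x) := fun x => by rw [← mul_assoc, ← (hcainv d).eq, mul_assoc]
  have Odainv' : d * ainv = ainv * d := (hcainv d).eq.symm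
  have Ocb : ∀ x : R, c * (b * x) = b * (c * x) := fun x => by rw [← mul_assoc, ← (hcb c).eq, mul_assoc]
  have Ocb' : c * b = b * c := (hcb c).eq.symm
  have Odb : ∀ x : R, d * (b * x) = b * (d * x) := fun x => by rw [← mul_assoc, ← (hcb d).eq, mul_assoc]
  have Odb' : d * b = b * d := (hcb d).eq.symm
  have Odc : ∀ x : R, d * (c * x) = c * (d * x) := fun x => by rw [← mul_assoc, ← (hcc d).eq, mul_assoc]
  have Odc' : d * c = c * d := (hcc d).eq.symm
  have Hai : ∀ x : R, a * (ainv * x) = x := fun x => by rw [← mul_assoc, hainv, one_mul]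
  have Hia : ∀ x : R, ainv * (a * x) = x := fun x => by rw [← mul_assoc, hainv', one_mul]
  have Aβα' : β * α = -(α * β) := by rw [hαβ, neg_neg]
  have Aθα' : θ * α = -(α * θ) := by rw [hαθ, neg_neg]
  have Aθβ' : θ * β = -(β * θ) := by rw [hβθ, neg_neg]
  have Aβα : ∀ x : R, β * (α * x) = -(α * (β * x)) := fun x => by
    rw [← mul_assoc, Aβα', neg_mul, mul_assoc]
  have Aθα : ∀ x : R, θ * (α * x) = -(α * (θ * x)) := fun x => by
    rw [← mul_assoc, Aθα', neg_mul, mul_assoc]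
  have Aθβ : ∀ x : R, θ * (β * x) = -(β * (θ * x)) := fun x => by
    rw [← mul_assoc, Aθβ', neg_mul, mul_assoc]
  have Zα : ∀ x : R, α * (α * x) = 0 := fun x => by rw [← mul_assoc, hα, zero_mul]
  have Zβ : ∀ x : R, β * (β * x) = 0 := fun x => by rw [← mul_assoc, hβ, zero_mul]
  have Zθ : ∀ x : R, θ * (θ * x) = 0 := fun x => by rw [← mul_assoc, hθ, zero_mul]
  have key : a * (d * θ) - b * (c * θ) + (a * (d * (α * (β * θ))) - b * (c * (α * (β * θ)))) = θ := by
    have h := congrArg (· * θ) hconstraint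
    simp only [sub_mul, add_mul, one_mul, mul_one, mul_assoc] at h
    linear_combination (norm := noncomm_ring) h
  subst hf hγ hδ hx₁ hy hρ hlam hs
  refine ⟨?_, ?_, ?_⟩
  · conv_rhs => rw [← key]
    simp only [mul_add, add_mul, mul_sub, sub_mul, mul_one, one_mul, mul_assoc, pow_two, two_mul,
      neg_mul, mul_neg, MAa, MAa', MAb, MAb', MAc, MAc', MAd, MAd', MAainv, MAainv', MBa, MBa', MBb, MBb', MBc, MBc', MBd, MBd', MBainv, MBainv', MTa, MTa', MTb, MTb', MTc, MTc', MTd, MTd', MTainv, MTainv', Oba, Oba', Oca, Oca', Oda, Oda', Obainv, Obainv', Ocainv, Ocainv', Odainv, Odainv', Ocb, Ocb', Odb, Odb', Odc, Odc', Hai, Hia, hainv, hainv',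
      Aβα, Aθα, Aθβ, Aβα', Aθα', Aθβ', Zα, Zβ, Zθ, hα, hβ, hθ,
      mul_zero, zero_mul, neg_neg, add_zero, zero_add, neg_zero, sub_zero, zero_sub]
    abel
  · simp only [mul_add, add_mul, mul_sub, sub_mul, mul_one, one_mul, mul_assoc, pow_two, two_mul,
      neg_mul, mul_neg, MAa, MAa', MAb, MAb', MAc, MAc', MAd, MAd', MAainv, MAainv', MBa, MBa', MBb, MBb', MBc, MBc', MBd, MBd', MBainv, MBainv', MTa, MTa', MTb, MTb', MTc, MTc', MTd, MTd', MTainv, MTainv', Oba, Oba', Oca, Oca', Oda, Oda', Obainv, Obainv', Ocainv, Ocainv', Odainv, Odainv', Ocb, Ocb', Odb, Odb', Odc, Odc', Hai, Hia, hainv, hainv',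
      Aβα, Aθα, Aθβ, Aβα', Aθα', Aθβ', Zα, Zβ, Zθ, hα, hβ, hθ,
      mul_zero, zero_mul, neg_neg, add_zero, zero_add, neg_zero, sub_zero, zero_sub]
    abel
  · simp only [mul_add, add_mul, mul_sub, sub_mul, mul_one, one_mul, mul_assoc, pow_two, two_mul,
      neg_mul, mul_neg, MAa, MAa', MAb, MAb', MAc, MAc', MAd, MAd', MAainv, MAainv', MBa, MBa', MBb, MBb', MBc, MBc', MBd, MBd', MBainv, MBainv', MTa, MTa', MTb, MTb', MTc, MTc', MTd, MTd', MTainv, MTainv', Oba, Oba', Oca, Oca', Oda, Oda', Obainv, Obainv', Ocainv, Ocainv', Odainv, Odainv', Ocb, Ocb', Odb, Odb', Odc, Odc', Hai, Hia, hainv, hainv',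
      Aβα, Aθα, Aθβ, Aβα', Aθα', Aθβ', Zα, Zβ, Zθ, hα, hβ, hθ,
      mul_zero, zero_mul, neg_neg, add_zero, zero_add, neg_zero, sub_zero, zero_sub]
end

section
/- Let R be an associative unital ring, let c be a central element of R, and let β, θ ∈ R with β² = θ² = 0 and βθ = −θβ. Consider the supermatrix g^s with entries a = 1+cθβ, b = θβ, α = −cθ (first row), c, d = 1+cθβ, β (second row), γ = β+c²θ, δ = cθ, f = 1+cβθ (third row). Then the coordinates of the image of e_θ under g^s, namely x₁ = a² + 2γθc, x₂ = b² + 2δθd, y = ab + γθd − cθδ, ρ = aα + γθβ + cθf, λ = bα + δθβ + dθf, satisfy (x₁, x₂, y, ρ, λ) = (1, 0, 0, 0, θ); that is, g^s lies in the stabilizer of the light-cone point e_θ = (1,0,0,0,θ). -/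
/-- The element `g^s` of `OSp(1|2)` with the indicated entries stabilizes the
light-cone point `e_θ = (1,0,0,0,θ)`: the coordinates of the image of `e_θ`
under `g^s` are `(1, 0, 0, 0, θ)`. -/
theorem stmt_10 (R : Type*) [Ring R]
    (c : R) (hcc : ∀ r : R, Commute c r)
    (β θ : R) (hβ : β * β = 0) (hθ : θ * θ = 0) (hβθ : β * θ = -(θ * β))
    (a b α d γ δ f x₁ x₂ y ρ lam : R)
    (ha : a = 1 + c * θ * β) (hb : b = θ * β) (hα : α = -(c * θ))
    (hd : d = 1 + c * θ * β)
    (hγ : γ = β + c ^ 2 * θ) (hδ : δ = c * θ) (hf : f = 1 + c * β * θ)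
    (hx₁ : x₁ = a ^ 2 + 2 * (γ * θ * c))
    (hx₂ : x₂ = b ^ 2 + 2 * (δ * θ * d))
    (hy : y = a * b + γ * θ * d - c * θ * δ)
    (hρ : ρ = a * α + γ * θ * β + c * θ * f)
    (hlam : lam = b * α + δ * θ * β + d * θ * f) :
    x₁ = 1 ∧ x₂ = 0 ∧ y = 0 ∧ ρ = 0 ∧ lam = θ := by
  have hθc : ∀ r : R, θ * (c * r) = c * (θ * r) := fun r => by
    rw [← mul_assoc, (hcc θ).symm.eq, mul_assoc]
  have hβc : ∀ r : R, β * (c * r) = c * (β * r) := fun r => by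
    rw [← mul_assoc, (hcc β).symm.eq, mul_assoc]
  have hθc' : θ * c = c * θ := (hcc θ).symm.eq
  have hβc' : β * c = c * β := (hcc β).symm.eq
  have hθθ : ∀ r : R, θ * (θ * r) = 0 := fun r => by rw [← mul_assoc, hθ, zero_mul]
  have hββ : ∀ r : R, β * (β * r) = 0 := fun r => by rw [← mul_assoc, hβ, zero_mul]
  have hβθr : ∀ r : R, β * (θ * r) = -(θ * (β * r)) := fun r => by
    rw [← mul_assoc, hβθ, neg_mul, mul_assoc]
  subst ha hb hα hd hγ hδ hf hx₁ hx₂ hy hρ hlam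
  refine ⟨?_, ?_, ?_, ?_, ?_⟩ <;>
    noncomm_ring <;>
    simp [mul_assoc, hθc, hβc, hθc', hβc', hβθ, hβθr, hθθ, hββ, hθ, hβ]
end

section
/- Let A be an associative unital ℂ-algebra, let x₁, x₂, y be central elements with x₂ invertible, let φ, θ, α ∈ A pairwise anticommute with φ² = θ² = α² = 0, and assume the hyperboloid relation x₁x₂ − y² + 2φθ = 1. Define z = (i − y − iφθ)·x₂⁻¹, η = θ(1+iy)·x₂⁻¹ − iφ, and the infinitesimal variations δx₁ = 0, δx₂ = −2αθ, δy = −αφ, δφ = αx₁, δθ = αy, together with the induced variations δz = (−δy − i(δφ·θ + φ·δθ))·x₂⁻¹ − (i − y − iφθ)·x₂⁻²·δx₂ and δη = δθ·(1+iy)·x₂⁻¹ + θ·i·δy·x₂⁻¹ − θ(1+iy)·x₂⁻²·δx₂ − i·δφ. Then δz = α·η·z and δη = −α·z; thus the infinitesimal action of the odd generator v₊ of OSp(1|2) on the super hyperboloid corresponds under (z, η) to an infinitesimal superconformal transformation of the super upper half-plane. -/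
/-- The infinitesimal action of the odd generator `v₊` of `OSp(1|2)` on the
super hyperboloid corresponds, under the map `(z, η)` to the super upper
half-plane, to the infinitesimal superconformal transformation
`δz = αηz`, `δη = −αz`. -/
theorem stmt_11 (A : Type*) [Ring A] [Algebra ℂ A]
    (x₁ x₂ y x₂inv : A)
    (hx₁ : ∀ r : A, Commute x₁ r) (hx₂ : ∀ r : A, Commute x₂ r)
    (hy : ∀ r : A, Commute y r)
    (hinv : x₂ * x₂inv = 1) (hinv' : x₂inv * x₂ = 1)
    (φ θ α : A)
    (hφ : φ * φ = 0) (hθ : θ * θ = 0) (hα : α * α = 0)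
    (hφθ : φ * θ = -(θ * φ)) (hφα : φ * α = -(α * φ)) (hθα : θ * α = -(α * θ))
    (hyperboloid : x₁ * x₂ - y ^ 2 + 2 * (φ * θ) = 1)
    (z η δx₁ δx₂ δy δφ δθ δz δη : A)
    (hz : z = (algebraMap ℂ A Complex.I - y - algebraMap ℂ A Complex.I * (φ * θ)) * x₂inv)
    (hη : η = θ * (1 + algebraMap ℂ A Complex.I * y) * x₂inv - algebraMap ℂ A Complex.I * φ)
    (hδx₁ : δx₁ = 0) (hδx₂ : δx₂ = -(2 * (α * θ))) (hδy : δy = -(α * φ))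
    (hδφ : δφ = α * x₁) (hδθ : δθ = α * y)
    (hδz : δz = (-δy - algebraMap ℂ A Complex.I * (δφ * θ + φ * δθ)) * x₂inv
        - (algebraMap ℂ A Complex.I - y - algebraMap ℂ A Complex.I * (φ * θ))
          * x₂inv ^ 2 * δx₂)
    (hδη : δη = δθ * (1 + algebraMap ℂ A Complex.I * y) * x₂inv
        + θ * (algebraMap ℂ A Complex.I * δy) * x₂inv
        - θ * (1 + algebraMap ℂ A Complex.I * y) * x₂inv ^ 2 * δx₂
        - algebraMap ℂ A Complex.I * δφ) :
    δz = α * η * z ∧ δη = -(α * z) := by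
  set J := algebraMap ℂ A Complex.I with hJ
  have hJc : ∀ r : A, J * r = r * J := fun r => Algebra.commutes Complex.I r
  have hJJ : J * J = -1 := by
    rw [hJ, ← map_mul, Complex.I_mul_I, map_neg, map_one]
  have hvc : ∀ r : A, x₂inv * r = r * x₂inv := fun r => by
    calc x₂inv * r = x₂inv * (r * (x₂ * x₂inv)) := by rw [hinv, mul_one]
      _ = x₂inv * ((r * x₂) * x₂inv) := by rw [mul_assoc]
      _ = x₂inv * ((x₂ * r) * x₂inv) := by rw [← (hx₂ r).eq]
      _ = (x₂inv * x₂) * (r * x₂inv) := by rw [mul_assoc, ← mul_assoc]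
      _ = r * x₂inv := by rw [hinv', one_mul]
  have h2c : ∀ r : A, (2 : A) * r = r * 2 := fun r => by
    rw [two_mul, mul_two]
  -- pull lemmas
  have pJ : ∀ a b : A, a * (J * b) = J * (a * b) := fun a b => by
    rw [← mul_assoc, ← hJc, mul_assoc]
  have pJ' : ∀ a : A, a * J = J * a := fun a => (hJc a).symm
  have py : ∀ a b : A, a * (y * b) = y * (a * b) := fun a b => by
    rw [← mul_assoc, ← (hy a).eq, mul_assoc]
  have py' : ∀ a : A, a * y = y * a := fun a => ((hy a).eq).symm
  have pv : ∀ a b : A, a * (x₂inv * b) = x₂inv * (a * b) := fun a b => by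
    rw [← mul_assoc, ← hvc, mul_assoc]
  have pv' : ∀ a : A, a * x₂inv = x₂inv * a := fun a => (hvc a).symm
  have p2 : ∀ a b : A, a * ((2:A) * b) = (2:A) * (a * b) := fun a b => by
    rw [← mul_assoc, ← h2c, mul_assoc]
  have p2' : ∀ a : A, a * (2:A) = (2:A) * a := fun a => (h2c a).symm
  have hJJ2 : ∀ b : A, J * (J * b) = -b := fun b => by
    rw [← mul_assoc, hJJ, neg_mul, one_mul]
  -- odd normalization lemmas (order α < φ < θ)
  have sφα : φ * α = -(α * φ) := hφα
  have sφα' : ∀ b : A, φ * (α * b) = -(α * (φ * b)) := fun b => by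
    rw [← mul_assoc, hφα, neg_mul, mul_assoc]
  have sθα' : ∀ b : A, θ * (α * b) = -(α * (θ * b)) := fun b => by
    rw [← mul_assoc, hθα, neg_mul, mul_assoc]
  have sθφ : θ * φ = -(φ * θ) := by rw [hφθ, neg_neg]
  have sθφ' : ∀ b : A, θ * (φ * b) = -(φ * (θ * b)) := fun b => by
    rw [← mul_assoc, sθφ, neg_mul, mul_assoc]
  have qα' : ∀ b : A, α * (α * b) = 0 := fun b => by
    rw [← mul_assoc, hα, zero_mul]
  have qφ' : ∀ b : A, φ * (φ * b) = 0 := fun b => by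
    rw [← mul_assoc, hφ, zero_mul]
  have qθ' : ∀ b : A, θ * (θ * b) = 0 := fun b => by
    rw [← mul_assoc, hθ, zero_mul]
  -- eliminate x₁
  have h12 : x₁ * x₂ = 1 + y * y - 2 * (φ * θ) := by
    rw [← hyperboloid]; noncomm_ring
  have hx1 : x₁ = (1 + y * y - 2 * (φ * θ)) * x₂inv := by
    calc x₁ = x₁ * (x₂ * x₂inv) := by rw [hinv, mul_one]
      _ = (x₁ * x₂) * x₂inv := by rw [mul_assoc]
      _ = _ := by rw [h12]
  constructor
  · rw [hδz, hδy, hδφ, hδθ, hδx₂, hη, hz, hx1]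
    try simp only [pow_two, mul_add, add_mul, mul_sub, sub_mul, neg_mul, mul_neg, neg_neg,
      mul_one, one_mul, mul_assoc]
    try simp only [pv, pv', mul_neg, neg_mul, neg_neg]
    try simp only [py, py', mul_neg, neg_mul, neg_neg]
    try simp only [pJ, pJ', mul_neg, neg_mul, neg_neg]
    try simp only [p2, p2', mul_neg, neg_mul, neg_neg]
    try simp only [hJJ2, hJJ, mul_neg, neg_mul, neg_neg, mul_one, one_mul]
    try simp only [sθφ, sθφ', hθα, sθα', hφα, sφα', hα, hφ, hθ, qα', qφ', qθ',
      mul_neg, neg_mul, neg_neg, mul_zero, zero_mul, neg_zero, mul_one]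
    noncomm_ring
  · rw [hδη, hδy, hδφ, hδθ, hδx₂, hz, hx1]
    try simp only [pow_two, mul_add, add_mul, mul_sub, sub_mul, neg_mul, mul_neg, neg_neg,
      mul_one, one_mul, mul_assoc]
    try simp only [pv, pv', mul_neg, neg_mul, neg_neg]
    try simp only [py, py', mul_neg, neg_mul, neg_neg]
    try simp only [pJ, pJ', mul_neg, neg_mul, neg_neg]
    try simp only [p2, p2', mul_neg, neg_mul, neg_neg]
    try simp only [hJJ2, hJJ, mul_neg, neg_mul, neg_neg, mul_one, one_mul]
    try simp only [sθφ, sθφ', hθα, sθα', hφα, sφα', hα, hφ, hθ, qα', qφ', qθ',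
      mul_neg, neg_mul, neg_neg, mul_zero, zero_mul, neg_zero, mul_one]
    noncomm_ring
end

section
/- Let R be an associative unital ring, let x₁, x₂, y be central elements of R with y invertible, and let ρ, λ ∈ R satisfy ρ² = λ² = 0 and ρλ = −λρ. If the light-cone relation x₁x₂ − y² + 2ρλ = 0 holds, then x₁·λ − y·ρ = −(x₁·y⁻¹)·(x₂·ρ − y·λ). Hence the two expressions √x₁·λ − (y/√x₁)·ρ and √x₂·ρ − (y/√x₂)·λ for the fermion label of a point of the super light cone agree up to sign. -/
/-- On the super light cone `x₁x₂ − y² + 2ρλ = 0` with `y` invertible, the two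
expressions for the fermion label agree up to sign:
`x₁λ − yρ = −(x₁y⁻¹)(x₂ρ − yλ)`. -/
theorem stmt_13 (R : Type*) [Ring R]
    (x₁ x₂ y yinv : R)
    (hx₁ : ∀ r : R, Commute x₁ r) (hx₂ : ∀ r : R, Commute x₂ r)
    (hy : ∀ r : R, Commute y r)
    (hyinv : y * yinv = 1) (hyinv' : yinv * y = 1)
    (ρ lam : R) (hρ : ρ * ρ = 0) (hlam : lam * lam = 0)
    (hρlam : ρ * lam = -(lam * ρ))
    (hlc : x₁ * x₂ - y ^ 2 + 2 * (ρ * lam) = 0) :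
    x₁ * lam - y * ρ = -((x₁ * yinv) * (x₂ * ρ - y * lam)) := by
  have hinvc : ∀ r : R, yinv * r = r * yinv := fun r => by
    calc yinv * r = yinv * r * (y * yinv) := by rw [hyinv, mul_one]
    _ = yinv * (y * r) * yinv := by rw [(hy r).eq]; noncomm_ring
    _ = r * yinv := by rw [← mul_assoc, hyinv', one_mul]
  have hx₁x₂ : x₁ * x₂ = y ^ 2 - 2 * (ρ * lam) := by linear_combination (norm := noncomm_ring) hlc
  have hplp : ρ * lam * ρ = 0 := by
    rw [hρlam]; rw [neg_mul, mul_assoc, hρ, mul_zero, neg_zero]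
  have key : x₁ * yinv * (x₂ * ρ) = y * ρ := by
    calc x₁ * yinv * (x₂ * ρ) = yinv * (x₁ * x₂) * ρ := by
          rw [(hx₁ yinv).eq]; rw [mul_assoc yinv x₁ (x₂ * ρ)]; noncomm_ring
    _ = yinv * (y ^ 2 - 2 * (ρ * lam)) * ρ := by rw [hx₁x₂]
    _ = yinv * y * (y * ρ) - yinv * (2 * (ρ * lam * ρ)) := by noncomm_ring
    _ = y * ρ := by rw [hyinv', hplp, mul_zero, mul_zero, sub_zero, one_mul]
  have key2 : x₁ * yinv * (y * lam) = x₁ * lam := by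
    rw [← mul_assoc, mul_assoc x₁ yinv y, hyinv', mul_one]
  rw [mul_sub, key, key2]
  noncomm_ring
end
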